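/- The forward-backward envelope φ_γ is continuously differentiable on ℝ^n with gradient ∇φ_γ(x) = (I − γ∇²f(x)) R_γ(x) for every x ∈ ℝ^n, and ∇φ_γ is locally Lipschitz continuous on ℝ^n. -/

import Mathlib

noncomputable section

open scoped RealInnerProductSpace
open Filter Topology Bornology

/-- The common setting: `f : ℝⁿ → ℝ` is `C^{1,1}` with gradient `f'`;
`g : ℝⁿ → ℝ ∪ {+∞}` is proper, lsc and `ρ`-weakly convex; `φ = f + g` is bounded below;
`γ ∈ (0, min (1/L_f) (1/ρ))`; and `prox x` is the unique minimizer of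
`z ↦ g z + ‖z - x‖²/(2γ)`. -/
structure FBEData (n : ℕ) where
  f : EuclideanSpace ℝ (Fin n) → ℝ
  g : EuclideanSpace ℝ (Fin n) → EReal
  Lf : ℝ
  ρ : ℝ
  γ : ℝ
  f' : EuclideanSpace ℝ (Fin n) → EuclideanSpace ℝ (Fin n)
  prox : EuclideanSpace ℝ (Fin n) → EuclideanSpace ℝ (Fin n)
  hLf : 0 < Lf
  hρ : 0 < ρ
  hγ0 : 0 < γ
  hγ : γ < min (1 / Lf) (1 / ρ)
  hf : ∀ x, HasGradientAt f (f' x) x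
  hf_lip : LipschitzWith (Real.toNNReal Lf) f'
  hg_proper : ∃ x, g x ≠ ⊤
  hg_nebot : ∀ x, g x ≠ ⊥
  hg_lsc : LowerSemicontinuous g
  hg_wc : ∀ x y : EuclideanSpace ℝ (Fin n), ∀ t : ℝ, 0 ≤ t → t ≤ 1 →
    g (t • x + (1 - t) • y) + (((ρ / 2) * ‖t • x + (1 - t) • y‖ ^ 2 : ℝ) : EReal)
      ≤ (t : EReal) * (g x + (((ρ / 2) * ‖x‖ ^ 2 : ℝ) : EReal))
        + ((1 - t : ℝ) : EReal) * (g y + (((ρ / 2) * ‖y‖ ^ 2 : ℝ) : EReal))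
  hφ_bdd : ∃ c : ℝ, ∀ x, (c : EReal) ≤ (f x : EReal) + g x
  hprox_min : ∀ x z,
    g (prox x) + (((1 / (2 * γ)) * ‖prox x - x‖ ^ 2 : ℝ) : EReal)
      ≤ g z + (((1 / (2 * γ)) * ‖z - x‖ ^ 2 : ℝ) : EReal)
  hprox_unique : ∀ x z,
    g z + (((1 / (2 * γ)) * ‖z - x‖ ^ 2 : ℝ) : EReal)
      ≤ g (prox x) + (((1 / (2 * γ)) * ‖prox x - x‖ ^ 2 : ℝ) : EReal) → z = prox x

namespace FBEData

variable {n : ℕ} (S : FBEData n)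

/-- The objective `φ = f + g` (with values in `ℝ ∪ {±∞}`). -/
def phi (x : EuclideanSpace ℝ (Fin n)) : EReal := (S.f x : EReal) + S.g x

/-- The forward-backward envelope, as an extended-real-valued infimum. -/
def fbeE (x : EuclideanSpace ℝ (Fin n)) : EReal :=
  ⨅ u : EuclideanSpace ℝ (Fin n),
    ((S.f x + ⟪S.f' x, u - x⟫ + (1 / (2 * S.γ)) * ‖u - x‖ ^ 2 : ℝ) : EReal) + S.g u

/-- The (real-valued) forward-backward envelope `φ_γ`. -/
def fbe (x : EuclideanSpace ℝ (Fin n)) : ℝ := (S.fbeE x).toReal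

/-- The forward-backward (proximal gradient) operator `T_γ`. -/
def T (x : EuclideanSpace ℝ (Fin n)) : EuclideanSpace ℝ (Fin n) :=
  S.prox (x - S.γ • S.f' x)

/-- The fixed-point residual `R_γ`. -/
def R (x : EuclideanSpace ℝ (Fin n)) : EuclideanSpace ℝ (Fin n) :=
  (1 / S.γ) • (x - S.T x)

/-- The Moreau envelope `g^γ` of `g`. -/
def moreauE (y : EuclideanSpace ℝ (Fin n)) : EReal :=
  ⨅ z : EuclideanSpace ℝ (Fin n),
    S.g z + (((1 / (2 * S.γ)) * ‖z - y‖ ^ 2 : ℝ) : EReal)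


-- ===== auxiliary general lemmas =====
section Aux
variable {F : Type*} [NormedAddCommGroup F] [InnerProductSpace ℝ F]

theorem FBE.quad_mid (a b : F) :
    ‖(1/2:ℝ)•a + (1-(1/2:ℝ))•b‖^2 = ‖a‖^2/2 + ‖b‖^2/2 - ‖a-b‖^2/4 := by
  have h1 : (1/2:ℝ)•a + (1-(1/2:ℝ))•b = (1/2:ℝ)•(a+b) := by module
  rw [h1, norm_smul]
  have h2 := norm_add_sq_real a b
  have h3 := norm_sub_sq_real a b
  simp only [Real.norm_eq_abs]
  rw [mul_pow]
  have : |(1/2 : ℝ)| = 1/2 := by norm_num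
  rw [this]
  nlinarith [h2, h3]

theorem FBE.grad_of_quad_bound [CompleteSpace F] (φ : F → ℝ) (v y : F) (K : ℝ) (hK : 0 ≤ K)
    (h : ∀ y', |φ y' - φ y - ⟪v, y' - y⟫| ≤ K * ‖y' - y‖^2) :
    HasGradientAt φ v y := by
  rw [hasGradientAt_iff_hasFDerivAt, hasFDerivAt_iff_isLittleO_nhds_zero]
  rw [Asymptotics.isLittleO_iff]
  intro c hc
  rw [Metric.eventually_nhds_iff]
  refine ⟨c/(K+1), by positivity, fun h' hh' => ?_⟩
  have hb := h (y + h')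
  simp only [add_sub_cancel_left] at hb
  have hn : ‖φ (y + h') - φ y - (InnerProductSpace.toDual ℝ F v) h'‖ ≤ K * ‖h'‖^2 := by
    simpa [Real.norm_eq_abs, InnerProductSpace.toDual_apply_apply] using hb
  refine hn.trans ?_
  have hd : ‖h'‖ < c/(K+1) := by simpa [dist_eq_norm] using hh'
  have hδ : (K+1) * (c/(K+1)) = c := mul_div_cancel₀ _ (by positivity)
  have hKh : K * ‖h'‖ ≤ c := by nlinarith [norm_nonneg h']
  nlinarith [norm_nonneg h', sq_nonneg ‖h'‖]

end Aux

lemma hγρ : S.γ * S.ρ < 1 := by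
  have h := lt_of_lt_of_le S.hγ (min_le_right _ _)
  calc S.γ * S.ρ < (1/S.ρ) * S.ρ := by apply mul_lt_mul_of_pos_right h S.hρ
  _ = 1 := one_div_mul_cancel (ne_of_gt S.hρ)

lemma σpos : 0 < 1/S.γ - S.ρ := by
  have h0 := S.hγ0
  rw [sub_pos, lt_div_iff₀ h0]
  linarith [S.hγρ]

lemma gprox_ne_top (y : EuclideanSpace ℝ (Fin n)) : S.g (S.prox y) ≠ ⊤ := by
  obtain ⟨z₀, hz₀⟩ := S.hg_proper
  have h := S.hprox_min y z₀
  intro htop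
  rw [htop] at h
  lift S.g z₀ to ℝ using ⟨hz₀, S.hg_nebot z₀⟩ with r hr
  rw [EReal.top_add_coe, ← EReal.coe_add] at h
  exact (EReal.coe_lt_top _).not_ge h

/-- real value of `g` at prox points -/
def gp (y : EuclideanSpace ℝ (Fin n)) : ℝ := (S.g (S.prox y)).toReal

lemma gp_eq (y : EuclideanSpace ℝ (Fin n)) : S.g (S.prox y) = ((S.gp y : ℝ) : EReal) :=
  (EReal.coe_toReal (S.gprox_ne_top y) (S.hg_nebot _)).symm

/-- the (real) Moreau envelope -/
def me (y : EuclideanSpace ℝ (Fin n)) : ℝ := S.gp y + (1/(2*S.γ)) * ‖S.prox y - y‖^2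

lemma me_le (y z : EuclideanSpace ℝ (Fin n)) (hz : S.g z ≠ ⊤) :
    S.me y ≤ (S.g z).toReal + (1/(2*S.γ)) * ‖z - y‖^2 := by
  have h := S.hprox_min y z
  rw [S.gp_eq] at h
  lift S.g z to ℝ using ⟨hz, S.hg_nebot z⟩ with r hr
  rw [← EReal.coe_add, ← EReal.coe_add, EReal.coe_le_coe_iff] at h
  simpa [me, EReal.toReal_coe] using h

lemma threept (y z : EuclideanSpace ℝ (Fin n)) (hz : S.g z ≠ ⊤) :
    S.me y + ((1/S.γ - S.ρ)/4) * ‖z - S.prox y‖^2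
      ≤ (S.g z).toReal + (1/(2*S.γ)) * ‖z - y‖^2 := by
  have hwc := S.hg_wc z (S.prox y) (1/2) (by norm_num) (by norm_num)
  rw [S.gp_eq y] at hwc
  lift S.g z to ℝ using ⟨hz, S.hg_nebot z⟩ with Gz hGz
  rw [← EReal.coe_add, ← EReal.coe_add, ← EReal.coe_mul, ← EReal.coe_mul, ← EReal.coe_add] at hwc
  have hmt : S.g ((1/2:ℝ)•z + (1-(1/2:ℝ))•(S.prox y)) ≠ ⊤ := by
    intro h; rw [h, EReal.top_add_coe] at hwc; exact (EReal.coe_lt_top _).not_ge hwc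
  lift S.g ((1/2:ℝ)•z + (1-(1/2:ℝ))•(S.prox y)) to ℝ using ⟨hmt, S.hg_nebot _⟩ with Gm hGm
  rw [← EReal.coe_add, EReal.coe_le_coe_iff] at hwc
  have hmin := S.hprox_min y ((1/2:ℝ)•z + (1-(1/2:ℝ))•(S.prox y))
  rw [S.gp_eq y, ← hGm, ← EReal.coe_add, ← EReal.coe_add, EReal.coe_le_coe_iff] at hmin
  have hA : ‖(1/2:ℝ)•z + (1-(1/2:ℝ))•(S.prox y)‖^2
      = ‖z‖^2/2 + ‖S.prox y‖^2/2 - ‖z - S.prox y‖^2/4 := FBE.quad_mid z (S.prox y)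
  have hB : ‖((1/2:ℝ)•z + (1-(1/2:ℝ))•(S.prox y)) - y‖^2
      = ‖z-y‖^2/2 + ‖S.prox y - y‖^2/2 - ‖z - S.prox y‖^2/4 := by
    have h := FBE.quad_mid (z - y) (S.prox y - y)
    have he : (1/2:ℝ)•(z-y) + (1-(1/2:ℝ))•(S.prox y - y)
        = ((1/2:ℝ)•z + (1-(1/2:ℝ))•(S.prox y)) - y := by module
    have h2 : (z - y) - (S.prox y - y) = z - S.prox y := by abel
    rw [he, h2] at h
    exact h
  rw [hA] at hwc
  rw [hB] at hmin
  simp only [me, EReal.toReal_coe]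
  have hγne : S.γ ≠ 0 := ne_of_gt S.hγ0
  have hcc : (1:ℝ)/S.γ = 2*(1/(2*S.γ)) := by field_simp
  nlinarith [hwc, hmin]

lemma prox_inner (y y' : EuclideanSpace ℝ (Fin n)) :
    ((1/S.γ - S.ρ)/2) * ‖S.prox y - S.prox y'‖^2
      ≤ (1/S.γ) * ⟪S.prox y - S.prox y', y - y'⟫ := by
  have h1 := S.threept y (S.prox y') (S.gprox_ne_top y')
  have h2 := S.threept y' (S.prox y) (S.gprox_ne_top y)
  simp only [me, gp] at h1 h2
  have e1 := norm_sub_sq_real (S.prox y') y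
  have e2 := norm_sub_sq_real (S.prox y) y'
  have e3 := norm_sub_sq_real (S.prox y) y
  have e4 := norm_sub_sq_real (S.prox y') y'
  have e5 : ‖S.prox y' - S.prox y‖^2 = ‖S.prox y - S.prox y'‖^2 := by
    rw [← neg_sub, norm_neg]
  have hip : ⟪S.prox y - S.prox y', y - y'⟫
      = ⟪S.prox y, y⟫ - ⟪S.prox y, y'⟫ - ⟪S.prox y', y⟫ + ⟪S.prox y', y'⟫ := by
    simp [inner_sub_left, inner_sub_right]; ring
  have hcc : 1/(2*S.γ) = (1/2)*(1/S.γ) := by rw [one_div, one_div, mul_inv]; ring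
  rw [e1, e3, e5, hcc] at h1
  rw [e2, e4, hcc] at h2
  rw [hip]
  linarith [h1, h2]

lemma prox_lip (y y' : EuclideanSpace ℝ (Fin n)) :
    ‖S.prox y - S.prox y'‖ ≤ (2/(1 - S.γ*S.ρ)) * ‖y - y'‖ := by
  have h := S.prox_inner y y'
  have cs := real_inner_le_norm (S.prox y - S.prox y') (y - y')
  have hσ := S.σpos
  have hγ0 := S.hγ0
  have hγρ := S.hγρ
  have hpos : (0:ℝ) < 1 - S.γ*S.ρ := by linarith
  rcases eq_or_lt_of_le (norm_nonneg (S.prox y - S.prox y')) with h0 | h0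
  · rw [← h0]; positivity
  · have ht : (1/S.γ - S.ρ)/2 * ‖S.prox y - S.prox y'‖ ≤ (1/S.γ) * ‖y - y'‖ := by
      have hh : (1/S.γ - S.ρ)/2 * ‖S.prox y - S.prox y'‖^2
          ≤ (1/S.γ) * (‖S.prox y - S.prox y'‖ * ‖y - y'‖) := by
        refine h.trans ?_
        have hγi : (0:ℝ) < 1/S.γ := by positivity
        nlinarith [cs]
      nlinarith [hh, h0]
    rw [div_mul_eq_mul_div, le_div_iff₀ hpos]
    have e : (1 - S.γ*S.ρ) * ‖S.prox y - S.prox y'‖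
        = (2*S.γ) * ((1/S.γ - S.ρ)/2 * ‖S.prox y - S.prox y'‖) := by
      field_simp
    have e2 : (2*S.γ) * ((1/S.γ) * ‖y - y'‖) = 2 * ‖y - y'‖ := by
      field_simp
    calc ‖S.prox y - S.prox y'‖ * (1 - S.γ*S.ρ)
        = (2*S.γ) * ((1/S.γ - S.ρ)/2 * ‖S.prox y - S.prox y'‖) := by rw [← e]; ring
      _ ≤ (2*S.γ) * ((1/S.γ) * ‖y - y'‖) := by
          apply mul_le_mul_of_nonneg_left ht (by positivity)
      _ = 2 * ‖y - y'‖ := e2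


lemma me_upper (y y' : EuclideanSpace ℝ (Fin n)) :
    S.me y' ≤ S.me y + ⟪(1/S.γ)•(y - S.prox y), y'-y⟫ + (1/(2*S.γ))*‖y'-y‖^2 := by
  have h := S.me_le y' (S.prox y) (S.gprox_ne_top y)
  have hgp : (S.g (S.prox y)).toReal = S.gp y := rfl
  have e : ‖S.prox y - y'‖^2 = ‖S.prox y - y‖^2 - 2*⟪S.prox y - y, y'-y⟫ + ‖y'-y‖^2 := by
    have h2 := norm_sub_sq_real (S.prox y - y) (y'-y)
    have h3 : (S.prox y - y) - (y'-y) = S.prox y - y' := by abel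
    rw [h3] at h2; exact h2
  have hs : ⟪(1/S.γ)•(y - S.prox y), y'-y⟫ = (1/S.γ)*⟪y - S.prox y, y'-y⟫ :=
    real_inner_smul_left _ _ _
  have hii : ⟪y - S.prox y, y'-y⟫ = -⟪S.prox y - y, y'-y⟫ := by
    rw [← inner_neg_left, neg_sub]
  have hcc : 1/(2*S.γ) = (1/2)*(1/S.γ) := by rw [one_div, one_div, mul_inv]; ring
  rw [hgp] at h
  simp only [me] at h ⊢
  rw [e, hcc] at h
  rw [hs, hii, hcc]
  linarith [h]

lemma me_grad (y : EuclideanSpace ℝ (Fin n)) :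
    HasGradientAt S.me ((1/S.γ)•(y - S.prox y)) y := by
  have hγ0 := S.hγ0
  have hpos : (0:ℝ) < 1 - S.γ*S.ρ := by linarith [S.hγρ]
  set Lp : ℝ := 2/(1 - S.γ*S.ρ) with hLpdef
  have hLp : 0 < Lp := by positivity
  apply FBE.grad_of_quad_bound _ _ _ ((1/(2*S.γ)) + (1+Lp)*(1/S.γ))
    (by positivity)
  intro y'
  have h1 := S.me_upper y y'
  have h2 := S.me_upper y' y
  rw [abs_le]
  constructor
  · -- lower bound
    have hv : (1/S.γ)•(y' - S.prox y') - (1/S.γ)•(y - S.prox y)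
        = (1/S.γ)•((y'-y) - (S.prox y' - S.prox y)) := by
      rw [← smul_sub]; congr 1; abel
    have hnv : ‖(1/S.γ)•(y' - S.prox y') - (1/S.γ)•(y - S.prox y)‖
        ≤ (1/S.γ)*((1+Lp)*‖y'-y‖) := by
      rw [hv, norm_smul, Real.norm_eq_abs, abs_of_pos (by positivity : (0:ℝ) < 1/S.γ)]
      apply mul_le_mul_of_nonneg_left _ (by positivity)
      calc ‖(y'-y) - (S.prox y' - S.prox y)‖
          ≤ ‖y'-y‖ + ‖S.prox y' - S.prox y‖ := norm_sub_le _ _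
        _ ≤ ‖y'-y‖ + Lp*‖y'-y‖ := by
            have hpl := S.prox_lip y' y
            rw [← hLpdef] at hpl
            linarith [hpl]
        _ = (1+Lp)*‖y'-y‖ := by ring
    have habs := abs_real_inner_le_norm
      ((1/S.γ)•(y' - S.prox y') - (1/S.γ)•(y - S.prox y)) (y'-y)
    have hneg := neg_abs_le (⟪(1/S.γ)•(y' - S.prox y') - (1/S.γ)•(y - S.prox y), y'-y⟫ : ℝ)
    have hsub : (⟪(1/S.γ)•(y' - S.prox y') - (1/S.γ)•(y - S.prox y), y'-y⟫ : ℝ)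
        = ⟪(1/S.γ)•(y' - S.prox y'), y'-y⟫ - ⟪(1/S.γ)•(y - S.prox y), y'-y⟫ :=
      inner_sub_left _ _ _
    have hih : (⟪(1/S.γ)•(y' - S.prox y'), y-y'⟫ : ℝ)
        = -⟪(1/S.γ)•(y' - S.prox y'), y'-y⟫ := by
      rw [← inner_neg_right, neg_sub]
    have hyy : ‖y - y'‖ = ‖y' - y‖ := norm_sub_rev _ _
    rw [hih, hyy] at h2
    have hmul : ‖(1/S.γ)•(y' - S.prox y') - (1/S.γ)•(y - S.prox y)‖ * ‖y'-y‖
        ≤ (1/S.γ)*((1+Lp)*‖y'-y‖)*‖y'-y‖ :=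
      mul_le_mul_of_nonneg_right hnv (norm_nonneg _)
    nlinarith [h2, habs, hneg, hsub, hmul, sq_nonneg ‖y'-y‖, norm_nonneg (y'-y)]
  · -- upper bound
    have hq : (0:ℝ) ≤ (1+Lp)*(1/S.γ)*‖y'-y‖^2 := by positivity
    linarith [h1]

lemma key_id (x u : EuclideanSpace ℝ (Fin n)) :
    S.f x + ⟪S.f' x, u - x⟫ + (1/(2*S.γ))*‖u-x‖^2
      = (S.f x - (S.γ/2)*‖S.f' x‖^2) + (1/(2*S.γ))*‖u - (x - S.γ•S.f' x)‖^2 := by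
  have hγne : S.γ ≠ 0 := ne_of_gt S.hγ0
  have e : u - (x - S.γ•S.f' x) = (u-x) + S.γ•S.f' x := by abel
  rw [e, norm_add_sq_real, real_inner_smul_right, norm_smul, Real.norm_eq_abs,
    abs_of_pos S.hγ0, real_inner_comm]
  field_simp
  ring

lemma fbeE_eq (x : EuclideanSpace ℝ (Fin n)) :
    S.fbeE x = (((S.f x - (S.γ/2)*‖S.f' x‖^2) + S.me (x - S.γ•S.f' x) : ℝ) : EReal) := by
  apply le_antisymm
  · unfold fbeE
    refine iInf_le_of_le (S.prox (x - S.γ•S.f' x)) ?_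
    rw [S.gp_eq (x - S.γ•S.f' x), S.key_id x, ← EReal.coe_add]
    apply le_of_eq
    rw [EReal.coe_eq_coe_iff]
    simp only [me]
    ring
  · unfold fbeE
    refine le_iInf fun u => ?_
    rcases eq_or_ne (S.g u) ⊤ with h | h
    · rw [h, EReal.coe_add_top]
      exact le_top
    · have hle := S.me_le (x - S.γ•S.f' x) u h
      lift S.g u to ℝ using ⟨h, S.hg_nebot u⟩ with Gu hGu
      rw [EReal.toReal_coe] at hle
      rw [← EReal.coe_add, EReal.coe_le_coe_iff, S.key_id x]
      linarith [hle]

lemma fbe_eq (x : EuclideanSpace ℝ (Fin n)) :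
    S.fbe x = S.f x - (S.γ/2)*‖S.f' x‖^2 + S.me (x - S.γ•S.f' x) := by
  rw [fbe, S.fbeE_eq]
  exact EReal.toReal_coe _

lemma f''_symm (f'' : EuclideanSpace ℝ (Fin n) → (EuclideanSpace ℝ (Fin n) →L[ℝ] EuclideanSpace ℝ (Fin n)))
    (hf'' : ∀ x, HasFDerivAt S.f' (f'' x) x) (x u w : EuclideanSpace ℝ (Fin n)) :
    ⟪f'' x u, w⟫ = ⟪f'' x w, u⟫ := by
  have hfd : ∀ y, HasFDerivAt S.f (innerSL ℝ (S.f' y)) y := by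
    intro y
    have h := (S.hf y).hasFDerivAt
    have he : (InnerProductSpace.toDual ℝ (EuclideanSpace ℝ (Fin n))) (S.f' y)
        = innerSL ℝ (S.f' y) := by
      ext w
      simp [InnerProductSpace.toDual_apply_apply, innerSL_apply_apply]
    rwa [he] at h
  have hD : HasFDerivAt (fun y => innerSL ℝ (S.f' y))
      ((innerSL ℝ (E := EuclideanSpace ℝ (Fin n))).comp (f'' x)) x :=
    (innerSL ℝ (E := EuclideanSpace ℝ (Fin n))).hasFDerivAt.comp x (hf'' x)
  have h := second_derivative_symmetric hfd hD u w
  simpa [ContinuousLinearMap.comp_apply, innerSL_apply_apply] using h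

lemma v_id (x : EuclideanSpace ℝ (Fin n)) :
    (1/S.γ)•((x - S.γ•S.f' x) - S.prox (x - S.γ•S.f' x)) = S.R x - S.f' x := by
  have hγne : S.γ ≠ 0 := ne_of_gt S.hγ0
  simp only [R, T]
  rw [show (x - S.γ•S.f' x) - S.prox (x - S.γ•S.f' x)
      = (x - S.prox (x - S.γ•S.f' x)) - S.γ•S.f' x by abel]
  rw [smul_sub, smul_smul, one_div, inv_mul_cancel₀ hγne, one_smul]

lemma grad_fbe
    (f'' : EuclideanSpace ℝ (Fin n) → (EuclideanSpace ℝ (Fin n) →L[ℝ] EuclideanSpace ℝ (Fin n)))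
    (hf'' : ∀ x, HasFDerivAt S.f' (f'' x) x) (x : EuclideanSpace ℝ (Fin n)) :
    HasGradientAt S.fbe (S.R x - S.γ • f'' x (S.R x)) x := by
  have hsym := S.f''_symm f'' hf'' x
  -- derivative of the inner composition
  have h_me : HasFDerivAt S.me
      ((InnerProductSpace.toDual ℝ (EuclideanSpace ℝ (Fin n))) ((1/S.γ)•((x - S.γ•S.f' x) - S.prox (x - S.γ•S.f' x)))) (x - S.γ•S.f' x) :=
    (S.me_grad (x - S.γ•S.f' x)).hasFDerivAt
  have h_h : HasFDerivAt (fun z : EuclideanSpace ℝ (Fin n) => z - S.γ•S.f' z)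
      (ContinuousLinearMap.id ℝ (EuclideanSpace ℝ (Fin n)) - S.γ•(f'' x)) x :=
    (hasFDerivAt_id x).sub ((hf'' x).const_smul S.γ)
  have h_comp : HasFDerivAt (fun z => S.me (z - S.γ•S.f' z))
      (((InnerProductSpace.toDual ℝ (EuclideanSpace ℝ (Fin n))) ((1/S.γ)•((x - S.γ•S.f' x) - S.prox (x - S.γ•S.f' x)))).comp
        (ContinuousLinearMap.id ℝ (EuclideanSpace ℝ (Fin n)) - S.γ•(f'' x))) x :=
    by have := h_me.comp x h_h; exact this
  have h_f : HasFDerivAt S.f ((InnerProductSpace.toDual ℝ (EuclideanSpace ℝ (Fin n))) (S.f' x)) x := (S.hf x).hasFDerivAt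
  have h_n : HasFDerivAt (fun z => (⟪S.f' z, S.f' z⟫ : ℝ))
      ((fderivInnerCLM ℝ (S.f' x, S.f' x)).comp ((f'' x).prod (f'' x))) x :=
    (hf'' x).inner ℝ (hf'' x)
  have H := (h_f.sub (h_n.const_mul (S.γ/2))).add h_comp
  have hfun : S.fbe = fun z => (S.f z - (S.γ/2) * ⟪S.f' z, S.f' z⟫) + S.me (z - S.γ•S.f' z) := by
    funext z
    rw [S.fbe_eq z, real_inner_self_eq_norm_sq]
  rw [hasGradientAt_iff_hasFDerivAt, hfun]
  have hCLM : ((InnerProductSpace.toDual ℝ (EuclideanSpace ℝ (Fin n))) (S.f' x) - (S.γ/2) • ((fderivInnerCLM ℝ (S.f' x, S.f' x)).comp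
        ((f'' x).prod (f'' x)))
      + ((InnerProductSpace.toDual ℝ (EuclideanSpace ℝ (Fin n))) ((1/S.γ)•((x - S.γ•S.f' x) - S.prox (x - S.γ•S.f' x)))).comp
        (ContinuousLinearMap.id ℝ (EuclideanSpace ℝ (Fin n)) - S.γ•(f'' x)))
      = (InnerProductSpace.toDual ℝ (EuclideanSpace ℝ (Fin n))) (S.R x - S.γ • f'' x (S.R x)) := by
    ext w
    rw [S.v_id x]
    simp only [ContinuousLinearMap.add_apply, ContinuousLinearMap.sub_apply,
      ContinuousLinearMap.smul_apply, ContinuousLinearMap.comp_apply,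
      ContinuousLinearMap.prod_apply, fderivInnerCLM_apply,
      ContinuousLinearMap.id_apply, InnerProductSpace.toDual_apply_apply, smul_eq_mul]
    simp only [inner_sub_left, inner_sub_right, real_inner_smul_right, real_inner_smul_left]
    have e1 : S.γ * ⟪S.f' x, (f'' x) w⟫ = S.γ * ⟪(f'' x) w, S.f' x⟫ := by
      rw [real_inner_comm]
    have e2 : S.γ * ⟪S.R x, (f'' x) w⟫ = S.γ * ⟪(f'' x) w, S.R x⟫ := by
      rw [real_inner_comm]
    have e3 : S.γ * ⟪(f'' x) (S.R x), w⟫ = S.γ * ⟪(f'' x) w, S.R x⟫ := by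
      rw [hsym (S.R x) w]
    linarith [e1, e2, e3]
  rw [hCLM] at H
  exact H

lemma R_lip :
    ∃ C : ℝ, 0 ≤ C ∧ ∀ a b : EuclideanSpace ℝ (Fin n), ‖S.R a - S.R b‖ ≤ C * ‖a - b‖ := by
  have hγ0 := S.hγ0
  have hpos : (0:ℝ) < 1 - S.γ*S.ρ := by linarith [S.hγρ]
  set Lp : ℝ := 2/(1 - S.γ*S.ρ) with hLpdef
  have hLp : 0 < Lp := by positivity
  have hLf := S.hLf
  refine ⟨(1/S.γ)*(1 + Lp*(1+S.γ*S.Lf)), by positivity, fun a b => ?_⟩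
  have hT : ‖S.T a - S.T b‖ ≤ Lp*(1+S.γ*S.Lf)*‖a - b‖ := by
    have h1 := S.prox_lip (a - S.γ•S.f' a) (b - S.γ•S.f' b)
    rw [← hLpdef] at h1
    have h2 : ‖(a - S.γ•S.f' a) - (b - S.γ•S.f' b)‖ ≤ (1+S.γ*S.Lf)*‖a-b‖ := by
      have e : (a - S.γ•S.f' a) - (b - S.γ•S.f' b) = (a - b) - S.γ•(S.f' a - S.f' b) := by
        rw [smul_sub]; abel
      rw [e]
      have hf := S.hf_lip.dist_le_mul a b
      rw [Real.coe_toNNReal _ (le_of_lt S.hLf), dist_eq_norm, dist_eq_norm] at hf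
      calc ‖(a - b) - S.γ•(S.f' a - S.f' b)‖
          ≤ ‖a - b‖ + ‖S.γ•(S.f' a - S.f' b)‖ := norm_sub_le _ _
        _ = ‖a - b‖ + S.γ*‖S.f' a - S.f' b‖ := by
            rw [norm_smul, Real.norm_eq_abs, abs_of_pos hγ0]
        _ ≤ ‖a - b‖ + S.γ*(S.Lf*‖a - b‖) := by
            have := mul_le_mul_of_nonneg_left hf (le_of_lt hγ0)
            linarith
        _ = (1+S.γ*S.Lf)*‖a-b‖ := by ring
    calc ‖S.T a - S.T b‖ ≤ Lp*‖(a - S.γ•S.f' a) - (b - S.γ•S.f' b)‖ := by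
          simpa [T] using h1
      _ ≤ Lp*((1+S.γ*S.Lf)*‖a-b‖) := mul_le_mul_of_nonneg_left h2 (le_of_lt hLp)
      _ = Lp*(1+S.γ*S.Lf)*‖a-b‖ := by ring
  have e : S.R a - S.R b = (1/S.γ)•((a - b) - (S.T a - S.T b)) := by
    simp only [R]
    rw [← smul_sub]
    congr 1
    abel
  rw [e, norm_smul, Real.norm_eq_abs, abs_of_pos (by positivity : (0:ℝ) < 1/S.γ)]
  calc (1/S.γ)*‖(a - b) - (S.T a - S.T b)‖
      ≤ (1/S.γ)*(‖a-b‖ + ‖S.T a - S.T b‖) :=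
        mul_le_mul_of_nonneg_left (norm_sub_le _ _) (by positivity)
    _ ≤ (1/S.γ)*(‖a-b‖ + Lp*(1+S.γ*S.Lf)*‖a-b‖) := by
        have := hT
        have h0 : (0:ℝ) ≤ 1/S.γ := by positivity
        nlinarith
    _ = (1/S.γ)*(1 + Lp*(1+S.γ*S.Lf))*‖a-b‖ := by ring

end FBEData

/-- if moreover `f` is twice continuously differentiable with locally Lipschitz
Hessian `f''`, then `φ_γ` is continuously differentiable with
`∇φ_γ(x) = (I - γ ∇²f(x)) R_γ(x)`, and `∇φ_γ` is locally Lipschitz. -/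
theorem stmt3 {n : ℕ} (S : FBEData n)
    (f'' : EuclideanSpace ℝ (Fin n) → (EuclideanSpace ℝ (Fin n) →L[ℝ] EuclideanSpace ℝ (Fin n)))
    (hf'' : ∀ x, HasFDerivAt S.f' (f'' x) x)
    (hf''cont : Continuous f'')
    (hf''lip : LocallyLipschitz f'') :
    (∀ x, HasGradientAt S.fbe (S.R x - S.γ • f'' x (S.R x)) x) ∧
      LocallyLipschitz (fun x => S.R x - S.γ • f'' x (S.R x)) := by
  obtain ⟨C, hC0, hC⟩ := S.R_lip
  have hγ0 := S.hγ0
  refine ⟨S.grad_fbe f'' hf'', ?_⟩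
  intro x₀
  obtain ⟨K, t, ht, hK⟩ := hf''lip x₀
  have hRcont : Continuous S.R := by
    have : LipschitzWith (Real.toNNReal C) S.R := by
      apply LipschitzWith.of_dist_le'
      intro a b
      rw [dist_eq_norm, dist_eq_norm]
      exact hC a b
    exact this.continuous
  set M₁ : ℝ := ‖f'' x₀‖ + 1 with hM₁
  set M₂ : ℝ := ‖S.R x₀‖ + 1 with hM₂
  have hM₁0 : 0 < M₁ := by positivity
  have hM₂0 : 0 < M₂ := by positivity
  have ev₁ : {y | ‖f'' y‖ < M₁} ∈ 𝓝 x₀ := by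
    have h1 : Filter.Tendsto (fun y => ‖f'' y‖) (𝓝 x₀) (𝓝 ‖f'' x₀‖) :=
      (hf''cont.norm).continuousAt
    exact h1.eventually_lt_const (by rw [hM₁]; linarith)
  have ev₂ : {y | ‖S.R y‖ < M₂} ∈ 𝓝 x₀ := by
    have h1 : Filter.Tendsto (fun y => ‖S.R y‖) (𝓝 x₀) (𝓝 ‖S.R x₀‖) :=
      (hRcont.norm).continuousAt
    exact h1.eventually_lt_const (by rw [hM₂]; linarith)
  refine ⟨Real.toNNReal (C + S.γ*(M₁*C + (K:ℝ)*M₂)), t ∩ ({y | ‖f'' y‖ < M₁} ∩ {y | ‖S.R y‖ < M₂}),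
    Filter.inter_mem ht (Filter.inter_mem ev₁ ev₂), ?_⟩
  apply LipschitzOnWith.of_dist_le'
  rintro a ⟨hat, ha1, ha2⟩ b ⟨hbt, hb1, hb2⟩
  have hKd : ‖f'' a - f'' b‖ ≤ (K:ℝ) * ‖a - b‖ := by
    have := (lipschitzOnWith_iff_dist_le_mul.mp hK) a hat b hbt
    rwa [dist_eq_norm, dist_eq_norm] at this
  have hsplit : f'' a (S.R a) - f'' b (S.R b)
      = f'' a (S.R a - S.R b) + (f'' a - f'' b) (S.R b) := by
    simp only [map_sub, ContinuousLinearMap.sub_apply]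
    abel
  have h1 : ‖f'' a (S.R a - S.R b)‖ ≤ M₁*(C*‖a-b‖) := by
    calc ‖f'' a (S.R a - S.R b)‖ ≤ ‖f'' a‖*‖S.R a - S.R b‖ :=
          ContinuousLinearMap.le_opNorm _ _
      _ ≤ M₁*(C*‖a-b‖) :=
          mul_le_mul (le_of_lt ha1) (hC a b) (norm_nonneg _) (le_of_lt hM₁0)
  have h2 : ‖(f'' a - f'' b) (S.R b)‖ ≤ ((K:ℝ)*‖a-b‖)*M₂ := by
    calc ‖(f'' a - f'' b) (S.R b)‖ ≤ ‖f'' a - f'' b‖*‖S.R b‖ :=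
          ContinuousLinearMap.le_opNorm _ _
      _ ≤ ((K:ℝ)*‖a-b‖)*M₂ :=
          mul_le_mul hKd (le_of_lt hb2) (norm_nonneg _)
            (mul_nonneg (NNReal.coe_nonneg K) (norm_nonneg _))
  have hmain : ‖(S.R a - S.γ • f'' a (S.R a)) - (S.R b - S.γ • f'' b (S.R b))‖
      ≤ (C + S.γ*(M₁*C + (K:ℝ)*M₂)) * ‖a - b‖ := by
    have e : (S.R a - S.γ • f'' a (S.R a)) - (S.R b - S.γ • f'' b (S.R b))
        = (S.R a - S.R b) - S.γ•(f'' a (S.R a) - f'' b (S.R b)) := by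
      rw [smul_sub]; abel
    rw [e]
    calc ‖(S.R a - S.R b) - S.γ•(f'' a (S.R a) - f'' b (S.R b))‖
        ≤ ‖S.R a - S.R b‖ + ‖S.γ•(f'' a (S.R a) - f'' b (S.R b))‖ := norm_sub_le _ _
      _ = ‖S.R a - S.R b‖ + S.γ*‖f'' a (S.R a) - f'' b (S.R b)‖ := by
          rw [norm_smul, Real.norm_eq_abs, abs_of_pos hγ0]
      _ ≤ C*‖a-b‖ + S.γ*(M₁*(C*‖a-b‖) + ((K:ℝ)*‖a-b‖)*M₂) := by
          have h3 : ‖f'' a (S.R a) - f'' b (S.R b)‖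
              ≤ M₁*(C*‖a-b‖) + ((K:ℝ)*‖a-b‖)*M₂ := by
            rw [hsplit]
            exact (norm_add_le _ _).trans (add_le_add h1 h2)
          have h4 := mul_le_mul_of_nonneg_left h3 (le_of_lt hγ0)
          linarith [hC a b]
      _ = (C + S.γ*(M₁*C + (K:ℝ)*M₂)) * ‖a - b‖ := by ring
  rw [dist_eq_norm, dist_eq_norm]
  exact hmain
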